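/- For the lazy random walk on a graph G given by the diffusion matrix P (P_{ij}=1/(2Δ) for edges, P_{ii}=1-deg(i)/(2Δ)), the deviation between the discrete load process with per-edge rounding errors e^{(s)}_{i,j} and the idealized process started from the same load vector satisfies x^{(t)}_ℓ - ξ^{(t)}_ℓ = Σ_{s=0}^{t-1} Σ_{[i:j]∈E} e^{(t-s)}_{i,j}·(P^s_{ℓ,i} - P^s_{ℓ,j}) for every vertex ℓ and time t. -/
import Mathlib


open Finset

/-- The diffusion matrix of a graph `G` with maximum degree `Δ`:
`P i j = 1/(2Δ)` for edges `{i,j}` and `P i i = 1 - deg(i)/(2Δ)`. -/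
noncomputable def diffP {V : Type*} [Fintype V] [DecidableEq V]
    (G : SimpleGraph V) [DecidableRel G.Adj] : Matrix V V ℝ :=
  fun i j =>
    if G.Adj i j then 1 / (2 * G.maxDegree)
    else if i = j then 1 - (G.degree i : ℝ) / (2 * G.maxDegree)
    else 0

lemma diffP_symm' {V : Type*} [Fintype V] [DecidableEq V]
    (G : SimpleGraph V) [DecidableRel G.Adj] (i j : V) :
    diffP G i j = diffP G j i := by
  unfold diffP
  by_cases h : G.Adj i j
  · simp [h, h.symm]
  · have h' : ¬ G.Adj j i := fun hj => h hj.symm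
    by_cases he : i = j
    · subst he; simp
    · simp [h, h', he, Ne.symm he]

lemma edge_sum' {V : Type*} [Fintype V] [DecidableEq V] [LinearOrder V]
    (G : SimpleGraph V) [DecidableRel G.Adj] (e' : V → V → ℝ)
    (hanti : ∀ i j, e' i j = - e' j i) (hsupp : ∀ i j, ¬ G.Adj i j → e' i j = 0)
    (g : V → ℝ) :
    ∑ p ∈ Finset.univ.filter (fun p : V × V => G.Adj p.1 p.2 ∧ p.1 < p.2),
        e' p.1 p.2 * (g p.1 - g p.2) = ∑ i, (∑ j, e' i j) * g i := by
  classical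
  set A := Finset.univ.filter (fun p : V × V => G.Adj p.1 p.2 ∧ p.1 < p.2) with hA
  set B := Finset.univ.filter (fun p : V × V => G.Adj p.1 p.2 ∧ p.2 < p.1) with hB
  have hBA : ∑ p ∈ B, e' p.1 p.2 * g p.1 = ∑ p ∈ A, -(e' p.1 p.2 * g p.2) := by
    apply Finset.sum_nbij' (fun p : V × V => p.swap) (fun p : V × V => p.swap)
    · intro a ha; simp only [hB, Finset.mem_filter, Finset.mem_univ, true_and] at ha
      simp [hA, ha.1.symm, ha.2]
    · intro a ha; simp only [hA, Finset.mem_filter, Finset.mem_univ, true_and] at ha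
      simp [hB, ha.1.symm, ha.2]
    · intro a _; simp
    · intro a _; simp
    · intro a _; simp [Prod.swap]; rw [hanti]; ring
  have hdisj : Disjoint A B := by
    rw [Finset.disjoint_left]
    intro p hp hq
    simp only [hA, hB, Finset.mem_filter] at hp hq
    exact absurd (hp.2.2.trans hq.2.2) (lt_irrefl _)
  have htotal : ∑ p ∈ A ∪ B, e' p.1 p.2 * g p.1 = ∑ p : V × V, e' p.1 p.2 * g p.1 := by
    apply Finset.sum_subset (Finset.subset_univ _)
    intro p _ hp
    simp only [hA, hB, Finset.mem_union, Finset.mem_filter, Finset.mem_univ, true_and,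
      not_or, not_and] at hp
    by_cases h : G.Adj p.1 p.2
    · have h1 := hp.1 h
      have h2 := hp.2 h
      have : p.1 = p.2 := le_antisymm (not_lt.mp h2) (not_lt.mp h1)
      exact absurd (this ▸ h) (G.irrefl)
    · rw [hsupp _ _ h]; ring
  have hfull : ∑ p : V × V, e' p.1 p.2 * g p.1 = ∑ i, (∑ j, e' i j) * g i := by
    rw [Fintype.sum_prod_type]
    simp [Finset.sum_mul]
  calc ∑ p ∈ A, e' p.1 p.2 * (g p.1 - g p.2)
      = ∑ p ∈ A, e' p.1 p.2 * g p.1 + ∑ p ∈ B, e' p.1 p.2 * g p.1 := by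
        rw [hBA]; rw [← Finset.sum_add_distrib]; apply Finset.sum_congr rfl; intros; ring
    _ = ∑ p ∈ A ∪ B, e' p.1 p.2 * g p.1 := (Finset.sum_union hdisj).symm
    _ = ∑ i, (∑ j, e' i j) * g i := htotal.trans hfull

lemma pow_succ_apply' {V : Type*} [Fintype V] [DecidableEq V]
    (G : SimpleGraph V) [DecidableRel G.Adj] (s : ℕ) (ℓ i : V) :
    ∑ j, (diffP G ^ s) j i * diffP G j ℓ = (diffP G ^ (s + 1)) ℓ i := by
  rw [pow_succ' (diffP G) s, Matrix.mul_apply]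
  apply Finset.sum_congr rfl
  intro j _
  rw [diffP_symm' G j ℓ]; ring

/-- Equation (2.1) of the paper: the deviation between the discrete load process
(with per-edge rounding errors `e`) and the idealized diffusion process started from
the same load vector is
`x_ℓ^{(t)} - ξ_ℓ^{(t)} = ∑_{s=0}^{t-1} ∑_{[i:j]∈E} e_{i,j}^{(t-s)} (P^s_{ℓ,i} - P^s_{ℓ,j})`. -/
theorem deviation_formula {V : Type*} [Fintype V] [DecidableEq V] [LinearOrder V]
    (G : SimpleGraph V) [DecidableRel G.Adj]
    (x ξ : ℕ → V → ℝ) (e : ℕ → V → V → ℝ)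
    (hanti : ∀ t i j, e t i j = - e t j i)
    (hsupp : ∀ t i j, ¬ G.Adj i j → e t i j = 0)
    (hinit : x 0 = ξ 0)
    (hξ : ∀ t ℓ, ξ (t + 1) ℓ = ∑ i, ξ t i * diffP G i ℓ)
    (hx : ∀ t i, x (t + 1) i = (∑ j, x t j * diffP G j i) + ∑ j, e (t + 1) i j) :
    ∀ t ℓ, x t ℓ - ξ t ℓ =
      ∑ s ∈ Finset.range t,
        ∑ p ∈ Finset.univ.filter (fun p : V × V => G.Adj p.1 p.2 ∧ p.1 < p.2),
          e (t - s) p.1 p.2 * ((diffP G ^ s) ℓ p.1 - (diffP G ^ s) ℓ p.2) := by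
  intro t
  induction t with
  | zero => intro ℓ; simp [hinit]
  | succ t ih =>
    intro ℓ
    have key : x (t + 1) ℓ - ξ (t + 1) ℓ =
        (∑ j, (x t j - ξ t j) * diffP G j ℓ) + ∑ j, e (t + 1) ℓ j := by
      rw [hx t ℓ, hξ t ℓ]
      rw [Finset.sum_congr rfl (fun j _ => sub_mul (x t j) (ξ t j) (diffP G j ℓ)),
        Finset.sum_sub_distrib]
      ring
    rw [key, Finset.sum_range_succ']
    have h0 : ∑ j, e (t + 1) ℓ j =
        ∑ p ∈ Finset.univ.filter (fun p : V × V => G.Adj p.1 p.2 ∧ p.1 < p.2),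
          e (t + 1 - 0) p.1 p.2 * ((diffP G ^ 0) ℓ p.1 - (diffP G ^ 0) ℓ p.2) := by
      rw [edge_sum' G (e (t + 1 - 0)) (hanti _) (hsupp _) (fun i => (diffP G ^ 0) ℓ i)]
      simp [Matrix.one_apply, mul_ite]
    have h1 : ∑ j, (x t j - ξ t j) * diffP G j ℓ =
        ∑ s ∈ Finset.range t,
          ∑ p ∈ Finset.univ.filter (fun p : V × V => G.Adj p.1 p.2 ∧ p.1 < p.2),
            e (t + 1 - (s + 1)) p.1 p.2 *
              ((diffP G ^ (s + 1)) ℓ p.1 - (diffP G ^ (s + 1)) ℓ p.2) := by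
      simp only [Nat.succ_sub_succ, Nat.sub_zero]
      calc ∑ j, (x t j - ξ t j) * diffP G j ℓ
          = ∑ j, (∑ s ∈ Finset.range t,
              ∑ p ∈ Finset.univ.filter (fun p : V × V => G.Adj p.1 p.2 ∧ p.1 < p.2),
                e (t - s) p.1 p.2 * ((diffP G ^ s) j p.1 - (diffP G ^ s) j p.2))
              * diffP G j ℓ := by
            apply Finset.sum_congr rfl; intro j _; rw [ih j]
        _ = ∑ s ∈ Finset.range t,
              ∑ p ∈ Finset.univ.filter (fun p : V × V => G.Adj p.1 p.2 ∧ p.1 < p.2),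
                e (t - s) p.1 p.2 *
                  ((diffP G ^ (s + 1)) ℓ p.1 - (diffP G ^ (s + 1)) ℓ p.2) := by
            simp only [Finset.sum_mul]
            rw [Finset.sum_comm]
            apply Finset.sum_congr rfl; intro s _
            rw [Finset.sum_comm]
            apply Finset.sum_congr rfl; intro p _
            rw [← pow_succ_apply' G s ℓ p.1, ← pow_succ_apply' G s ℓ p.2,
              ← Finset.sum_sub_distrib, Finset.mul_sum]
            apply Finset.sum_congr rfl; intro j _
            ring
    rw [h0, h1]
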